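/- arXiv:2601.17316 — 5 statements merged into one kernel-verified Lean document; each statement's English description precedes it below -/
import Mathlib

section
/- If a pair (X,Y) of Banach spaces satisfies the compact perturbation property for minimum modulus (CPPm), then the set of minimum modulus-attaining operators is dense in L(X,Y). -/
/-!
A rank-one perturbation of norm `‖T x - w‖` makes `T` send a unit vector `x` to any prescribed
`w`. With `w = 0` this shows that an operator with `m(T) < ε` is `ε`-close to one attaining its
minimum modulus `0`. If `m(T) ≥ ε`, shrinking `T x` for an almost minimizing `x` gives `S` with
`‖T - S‖ < ε / 2` and `m(S) < m(T) = m(S + (T - S))`, where `T - S` is compact. Such an `S`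
violates the CPPm identity unless it attains its minimum modulus, or unless `m(S) = 0` (the
junk value of `sSup` of an unbounded set), in which case the first step applies to `S`.
-/

open Filter Topology

noncomputable def minMod {X Y : Type*} [NormedAddCommGroup X] [NormedSpace ℝ X]
    [NormedAddCommGroup Y] [NormedSpace ℝ Y] (T : X →L[ℝ] Y) : ℝ :=
  sInf {r : ℝ | ∃ x : X, ‖x‖ = 1 ∧ ‖T x‖ = r}

def WeaklyNull {X : Type*} [NormedAddCommGroup X] [NormedSpace ℝ X] (x : ℕ → X) : Prop :=
  ∀ f : X →L[ℝ] ℝ, Tendsto (fun n => f (x n)) atTop (𝓝 0)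

def AttainsMinMod {X Y : Type*} [NormedAddCommGroup X] [NormedSpace ℝ X]
    [NormedAddCommGroup Y] [NormedSpace ℝ Y] (T : X →L[ℝ] Y) : Prop :=
  ∃ x : X, ‖x‖ = 1 ∧ ‖T x‖ = minMod T

def PairPropM (X Y : Type*) [NormedAddCommGroup X] [NormedSpace ℝ X]
    [NormedAddCommGroup Y] [NormedSpace ℝ Y] : Prop :=
  ∀ T : X →L[ℝ] Y, 1 ≤ minMod T →
    ∀ (x : X) (y : Y), ‖x‖ ≤ ‖y‖ → ∀ xs : ℕ → X, WeaklyNull xs →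
      limsup (fun n => ‖x + xs n‖) atTop ≤ limsup (fun n => ‖y + T (xs n)‖) atTop

def PairPropO (X Y : Type*) [NormedAddCommGroup X] [NormedSpace ℝ X]
    [NormedAddCommGroup Y] [NormedSpace ℝ Y] : Prop :=
  ∀ T : X →L[ℝ] Y, 1 ≤ minMod T →
    ∀ y : Y, y ≠ 0 → ∀ xs : ℕ → X, WeaklyNull xs →
      limsup (fun n => ‖xs n‖) atTop < limsup (fun n => ‖y + T (xs n)‖) atTop

def PropertyM (X : Type*) [NormedAddCommGroup X] [NormedSpace ℝ X] : Prop :=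
  ∀ x y : X, ‖y‖ ≤ ‖x‖ → ∀ xs : ℕ → X, WeaklyNull xs →
    limsup (fun n => ‖y + xs n‖) atTop ≤ limsup (fun n => ‖x + xs n‖) atTop

def OpialProperty (X : Type*) [NormedAddCommGroup X] [NormedSpace ℝ X] : Prop :=
  ∀ x : X, x ≠ 0 → ∀ xs : ℕ → X, WeaklyNull xs →
    limsup (fun n => ‖xs n‖) atTop < limsup (fun n => ‖x + xs n‖) atTop

def WeakMinimizingProperty (X Y : Type*) [NormedAddCommGroup X] [NormedSpace ℝ X]
    [NormedAddCommGroup Y] [NormedSpace ℝ Y] : Prop :=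
  ∀ T : X →L[ℝ] Y,
    (∃ xs : ℕ → X, (∀ n, ‖xs n‖ = 1) ∧
      Tendsto (fun n => ‖T (xs n)‖) atTop (𝓝 (minMod T)) ∧ ¬ WeaklyNull xs) →
    AttainsMinMod T

section MinMod

variable {X Y : Type*} [NormedAddCommGroup X] [NormedSpace ℝ X]
  [NormedAddCommGroup Y] [NormedSpace ℝ Y]

lemma minMod_le_norm_apply (T : X →L[ℝ] Y) {x : X} (hx : ‖x‖ = 1) : minMod T ≤ ‖T x‖ :=
  csInf_le ⟨0, by rintro r ⟨x, -, rfl⟩; exact norm_nonneg _⟩ ⟨x, hx, rfl⟩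

lemma exists_norm_apply_lt_of_minMod_lt [Nontrivial X] {T : X →L[ℝ] Y} {b : ℝ}
    (h : minMod T < b) : ∃ x : X, ‖x‖ = 1 ∧ ‖T x‖ < b := by
  obtain ⟨x, hx⟩ := exists_norm_eq X zero_le_one
  obtain ⟨r, ⟨x, hx, rfl⟩, hr⟩ :=
    exists_lt_of_csInf_lt (s := {r : ℝ | ∃ x : X, ‖x‖ = 1 ∧ ‖T x‖ = r}) ⟨‖T x‖, x, hx, rfl⟩ h
  exact ⟨x, hx, hr⟩

lemma attainsMinMod_of_apply_eq_zero {T : X →L[ℝ] Y} {x : X} (hx : ‖x‖ = 1) (h0 : T x = 0) :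
    AttainsMinMod T := by
  have hmin : minMod T = 0 :=
    le_antisymm (by simpa [h0] using minMod_le_norm_apply T hx)
      (le_csInf ⟨_, x, hx, rfl⟩ (by rintro r ⟨x, -, rfl⟩; exact norm_nonneg _))
  exact ⟨x, hx, by rw [h0, norm_zero, hmin]⟩

lemma isCompactOperator_smulRight (g : X →L[ℝ] ℝ) (y : Y) :
    IsCompactOperator (g.smulRight y) :=
  (isCompactOperator_of_locallyCompactSpace_dom g).clm_comp
    (ContinuousLinearMap.toSpanSingleton ℝ y)

lemma exists_isCompactOperator_sub_apply_eq (T : X →L[ℝ] Y) {x : X} (hx : ‖x‖ = 1) (w : Y) :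
    ∃ S : X →L[ℝ] Y, IsCompactOperator (T - S) ∧ ‖T - S‖ = ‖T x - w‖ ∧ S x = w := by
  obtain ⟨g, hg, hgx⟩ := exists_dual_vector ℝ x (by simp [hx])
  have hgx : g x = 1 := by simp [hgx, hx]
  refine ⟨T - g.smulRight (T x - w), ?_, ?_, ?_⟩
  · simpa using isCompactOperator_smulRight g (T x - w)
  · simp [ContinuousLinearMap.norm_smulRight_apply, hg]
  · simp [hgx]

lemma exists_attainsMinMod_near_of_minMod_lt [Nontrivial X] {T : X →L[ℝ] Y} {η : ℝ}
    (h : minMod T < η) : ∃ S : X →L[ℝ] Y, AttainsMinMod S ∧ ‖T - S‖ < η := by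
  obtain ⟨x, hx, hTx⟩ := exists_norm_apply_lt_of_minMod_lt h
  obtain ⟨S, -, hTS, hSx⟩ := exists_isCompactOperator_sub_apply_eq T hx 0
  exact ⟨S, attainsMinMod_of_apply_eq_zero hx hSx, by simpa [hTS] using hTx⟩

lemma exists_isCompactOperator_sub_minMod_le [Nontrivial X] (T : X →L[ℝ] Y) {r δ : ℝ}
    (hr : 0 < r) (hrm : r ≤ minMod T) (hδ : 0 < δ) :
    ∃ S : X →L[ℝ] Y, IsCompactOperator (T - S) ∧ ‖T - S‖ < minMod T - r + δ ∧ minMod S ≤ r := by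
  obtain ⟨x, hx, hTx⟩ := exists_norm_apply_lt_of_minMod_lt (lt_add_of_pos_right (minMod T) hδ)
  have hrTx : r ≤ ‖T x‖ := hrm.trans (minMod_le_norm_apply T hx)
  have hTx0 : 0 < ‖T x‖ := hr.trans_le hrTx
  obtain ⟨S, hK, hTS, hSx⟩ := exists_isCompactOperator_sub_apply_eq T hx ((r / ‖T x‖) • T x)
  have hnorm_diff : ‖T x - (r / ‖T x‖) • T x‖ = ‖T x‖ - r := by
    have hcoef : 0 ≤ 1 - r / ‖T x‖ := by rw [sub_nonneg, div_le_one hTx0]; exact hrTx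
    rw [show T x - (r / ‖T x‖) • T x = (1 - r / ‖T x‖) • T x by rw [sub_smul, one_smul],
      norm_smul, Real.norm_of_nonneg hcoef]
    field_simp
  have hSx_norm : ‖S x‖ = r := by
    rw [hSx, norm_smul, Real.norm_of_nonneg (by positivity), div_mul_cancel₀ _ hTx0.ne']
  refine ⟨S, hK, ?_, hSx_norm ▸ minMod_le_norm_apply S hx⟩
  rw [hTS, hnorm_diff]
  linarith

/-- When the set of values `m(S + K)` is unbounded, its real `sSup` is the junk value `0`,
which is why the conclusion is `m(S) = 0` rather than `False`. -/
lemma minMod_eq_zero_of_lt_minMod_add {S K : X →L[ℝ] Y}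
    (hsup : sSup {r : ℝ | ∃ K : X →L[ℝ] Y, IsCompactOperator ⇑K ∧ r = minMod (S + K)} = minMod S)
    (hK : IsCompactOperator K) (hlt : minMod S < minMod (S + K)) : minMod S = 0 := by
  by_cases hbdd : BddAbove {r : ℝ | ∃ K : X →L[ℝ] Y, IsCompactOperator ⇑K ∧ r = minMod (S + K)}
  · have := le_csSup hbdd ⟨K, hK, rfl⟩
    linarith
  · rw [← hsup, Real.sSup_of_not_bddAbove hbdd]

end MinMod

theorem stmt1_general {X Y : Type*} [NormedAddCommGroup X] [NormedSpace ℝ X]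
    [NormedAddCommGroup Y] [NormedSpace ℝ Y] [Nontrivial X]
    (hCPPm : ∀ T : X →L[ℝ] Y, ¬ AttainsMinMod T →
      sSup {r : ℝ | ∃ K : X →L[ℝ] Y, IsCompactOperator ⇑K ∧ r = minMod (T + K)} = minMod T) :
    ∀ T : X →L[ℝ] Y, ∀ ε : ℝ, 0 < ε → ∃ S : X →L[ℝ] Y, AttainsMinMod S ∧ ‖T - S‖ < ε := by
  intro T ε hε
  by_cases hsmall : minMod T < ε
  · exact exists_attainsMinMod_near_of_minMod_lt hsmall
  obtain ⟨S, hK, hTS, hST⟩ := exists_isCompactOperator_sub_minMod_le T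
    (r := minMod T - ε / 4) (δ := ε / 4) (by linarith) (by linarith) (by positivity)
  by_cases hS : AttainsMinMod S
  · exact ⟨S, hS, by linarith⟩
  have hS0 : minMod S = 0 :=
    minMod_eq_zero_of_lt_minMod_add (hCPPm S hS) hK (by rw [add_sub_cancel]; linarith)
  obtain ⟨S', hS', hSS'⟩ :=
    exists_attainsMinMod_near_of_minMod_lt (T := S) (η := ε / 2) (by rw [hS0]; positivity)
  refine ⟨S', hS', ?_⟩
  calc ‖T - S'‖ ≤ ‖T - S‖ + ‖S - S'‖ := norm_sub_le_norm_sub_add_norm_sub _ _ _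
    _ < ε := by linarith

theorem stmt1 {X Y : Type*} [NormedAddCommGroup X] [NormedSpace ℝ X] [CompleteSpace X]
    [NormedAddCommGroup Y] [NormedSpace ℝ Y] [CompleteSpace Y] [Nontrivial X]
    (hCPPm : ∀ T : X →L[ℝ] Y, ¬ AttainsMinMod T →
      sSup {r : ℝ | ∃ K : X →L[ℝ] Y, IsCompactOperator ⇑K ∧ r = minMod (T + K)} = minMod T) :
    ∀ T : X →L[ℝ] Y, ∀ ε : ℝ, 0 < ε → ∃ S : X →L[ℝ] Y, AttainsMinMod S ∧ ‖T - S‖ < ε :=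
  stmt1_general hCPPm
end

section
/- Let X and Y be Banach spaces. If Y has the Opial property, then the pair (X,Y) has property (o). -/
open Filter Topology

lemma weaklyNull_bounded {X : Type*} [NormedAddCommGroup X] [NormedSpace ℝ X]
    {xs : ℕ → X} (h : WeaklyNull xs) : ∃ C : ℝ, ∀ n, ‖xs n‖ ≤ C := by
  set g : ℕ → StrongDual ℝ X →L[ℝ] ℝ :=
    fun n => NormedSpace.inclusionInDoubleDual ℝ X (xs n) with hg
  have hpt : ∀ f : StrongDual ℝ X, ∃ C, ∀ n, ‖g n f‖ ≤ C := by
    intro f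
    have : Tendsto (fun n => ‖f (xs n)‖) atTop (𝓝 ‖(0 : ℝ)‖) := (h f).norm
    obtain ⟨C, hC⟩ := this.bddAbove_range
    exact ⟨C, fun n => by simpa [hg, NormedSpace.dual_def] using hC ⟨n, rfl⟩⟩
  obtain ⟨C', hC'⟩ := banach_steinhaus hpt
  refine ⟨C', fun n => ?_⟩
  have : ‖g n‖ = ‖xs n‖ := by
    have := (NormedSpace.inclusionInDoubleDualLi ℝ (E := X)).norm_map (xs n)
    simpa [hg, NormedSpace.inclusionInDoubleDualLi] using this
  rw [← this]; exact hC' n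

lemma norm_le_of_minMod {X Y : Type*} [NormedAddCommGroup X] [NormedSpace ℝ X]
    [NormedAddCommGroup Y] [NormedSpace ℝ Y] {T : X →L[ℝ] Y} (hT : 1 ≤ minMod T)
    (x : X) : ‖x‖ ≤ ‖T x‖ := by
  rcases eq_or_ne x 0 with rfl | hx
  · simp
  · have hnx : ‖x‖ ≠ 0 := norm_ne_zero_iff.mpr hx
    set u := ‖x‖⁻¹ • x with hu
    have hu1 : ‖u‖ = 1 := by
      rw [hu, norm_smul, norm_inv, norm_norm, inv_mul_cancel₀ hnx]
    have hmem : ‖T u‖ ∈ {r : ℝ | ∃ x : X, ‖x‖ = 1 ∧ ‖T x‖ = r} := ⟨u, hu1, rfl⟩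
    have hbdd : BddBelow {r : ℝ | ∃ x : X, ‖x‖ = 1 ∧ ‖T x‖ = r} :=
      ⟨0, fun r ⟨z, _, hz⟩ => hz ▸ norm_nonneg _⟩
    have h1 : (1 : ℝ) ≤ ‖T u‖ := hT.trans (csInf_le hbdd hmem)
    have hTu : ‖T u‖ = ‖x‖⁻¹ * ‖T x‖ := by
      rw [hu, map_smul, norm_smul, norm_inv, norm_norm]
    have := mul_le_mul_of_nonneg_left h1 (norm_nonneg x)
    rw [mul_one, hTu, ← mul_assoc, mul_inv_cancel₀ hnx, one_mul] at this
    exact this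

theorem stmt5 {X Y : Type*} [NormedAddCommGroup X] [NormedSpace ℝ X] [CompleteSpace X]
    [NormedAddCommGroup Y] [NormedSpace ℝ Y] [CompleteSpace Y]
    (hY : OpialProperty Y) : PairPropO X Y := by
  intro T hT y hy xs hxs
  set ys : ℕ → Y := fun n => T (xs n) with hys
  have hysnull : WeaklyNull ys := by
    intro g
    simpa [hys] using hxs (g.comp T)
  have hopial := hY y hy ys hysnull
  have hle : limsup (fun n => ‖xs n‖) atTop ≤ limsup (fun n => ‖ys n‖) atTop := by
    obtain ⟨C, hC⟩ := weaklyNull_bounded hxs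
    have hb : IsBoundedUnder (· ≤ ·) atTop (fun n => ‖ys n‖) :=
      isBoundedUnder_of ⟨‖T‖ * C, fun n =>
        (T.le_opNorm (xs n)).trans (mul_le_mul_of_nonneg_left (hC n) (norm_nonneg _))⟩
    exact limsup_le_limsup (Eventually.of_forall fun n => norm_le_of_minMod hT (xs n))
      (isCoboundedUnder_le_of_le atTop fun n => norm_nonneg _) hb
  exact lt_of_le_of_lt hle hopial
end

section
/- Let X and Y be Banach spaces. If the modulus of asymptotic uniform smoothness of X is pointwise at most the modulus of asymptotic uniform convexity of Y (ρ̄_X(t) ≤ δ̄_Y(t) for all t ≥ 0), then the pair (X,Y) has property (m). -/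
open Filter Topology

noncomputable def asympUnifConvexityModulus (X : Type*) [NormedAddCommGroup X]
    [NormedSpace ℝ X] (t : ℝ) : ℝ :=
  sInf {r : ℝ | ∃ x : X, ‖x‖ = 1 ∧
    r = sSup {s : ℝ | ∃ Z : Submodule ℝ X, FiniteDimensional ℝ (X ⧸ Z) ∧
      s = sInf {u : ℝ | ∃ z ∈ Z, t ≤ ‖z‖ ∧ u = ‖x + z‖ - 1}}}

noncomputable def asympUnifSmoothnessModulus (X : Type*) [NormedAddCommGroup X]
    [NormedSpace ℝ X] (t : ℝ) : ℝ :=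
  sSup {r : ℝ | ∃ x : X, ‖x‖ = 1 ∧
    r = sInf {s : ℝ | ∃ Z : Submodule ℝ X, FiniteDimensional ℝ (X ⧸ Z) ∧
      s = sSup {u : ℝ | ∃ z ∈ Z, ‖z‖ ≤ t ∧ u = ‖x + z‖ - 1}}}

/-!
Fix `c < limsup ‖x + xₙ‖` and let `l` be a cluster value of `‖xₙ‖` along the indices with
`‖x + xₙ‖ > c`. As `(xₙ)` is weakly null, every finite-codimensional subspace `Z` eventually
contains vectors close to `xₙ`, which can be rescaled to norm exactly `l`. Feeding these into
the definition of `ρ̄_X` at the direction of `x` (by convexity of the norm, `‖x‖ ≤ ‖y‖` suffices)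
gives `c ≤ ‖y‖ (1 + ρ̄_X (l / ‖y‖))`; feeding those approximating `T xₙ`, whose norms are at
least `‖xₙ‖`, into the definition of `δ̄_Y` at `y / ‖y‖` gives
`‖y‖ (1 + δ̄_Y (l / ‖y‖)) ≤ limsup ‖y + T xₙ‖`, and `ρ̄_X ≤ δ̄_Y` links the two.
-/

open Set

lemma IsCompact.exists_forall_mem_nhds_frequently_and_mem {ι α : Type*} [TopologicalSpace α]
    {K : Set α} (hK : IsCompact K) {F : Filter ι} {p : ι → Prop} {f : ι → α}
    (hp : ∃ᶠ i in F, p i) (hf : ∀ i, f i ∈ K) :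
    ∃ l ∈ K, ∀ U ∈ 𝓝 l, ∃ᶠ i in F, p i ∧ f i ∈ U := by
  have := frequently_iff_neBot.1 hp
  obtain ⟨l, hl, hcl⟩ :=
    hK.exists_mapClusterPt (f := F ⊓ 𝓟 {i | p i}) (tendsto_principal.2 (.of_forall hf))
  exact ⟨l, hl, fun U hU => frequently_inf_principal.1 (mapClusterPt_iff_frequently.1 hcl U hU)⟩

section NormedSpace

variable {E F : Type*} [NormedAddCommGroup E] [NormedSpace ℝ E]
  [NormedAddCommGroup F] [NormedSpace ℝ F]

lemma norm_smul_add_le_max {a : ℝ} (ha : |a| ≤ 1) (u w : E) :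
    ‖a • u + w‖ ≤ max ‖u + w‖ ‖u - w‖ := by
  obtain ⟨ha₁, ha₂⟩ := abs_le.1 ha
  have hsplit : a • u + w = ((1 + a) / 2) • (u + w) - ((1 - a) / 2) • (u - w) := by module
  calc ‖a • u + w‖ ≤ (1 + a) / 2 * ‖u + w‖ + (1 - a) / 2 * ‖u - w‖ := by
        rw [hsplit]
        refine (norm_sub_le _ _).trans_eq ?_
        rw [norm_smul_of_nonneg (by linarith), norm_smul_of_nonneg (by linarith)]
    _ ≤ (1 + a) / 2 * max ‖u + w‖ ‖u - w‖ + (1 - a) / 2 * max ‖u + w‖ ‖u - w‖ := by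
        have := le_max_left ‖u + w‖ ‖u - w‖
        have := le_max_right ‖u + w‖ ‖u - w‖
        gcongr; all_goals linarith
    _ = max ‖u + w‖ ‖u - w‖ := by ring

lemma exists_norm_eq_one_norm_smul_eq [Nontrivial E] (x : E) :
    ∃ u : E, ‖u‖ = 1 ∧ ‖x‖ • u = x := by
  rcases eq_or_ne x 0 with rfl | hx
  · obtain ⟨u, hu⟩ := exists_norm_eq E zero_le_one
    exact ⟨u, hu, by simp⟩
  · exact ⟨NormedSpace.normalize x, NormedSpace.norm_normalize_eq_one_iff.2 hx,
      NormedSpace.norm_smul_normalize x⟩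

lemma Submodule.exists_mem_norm_eq_norm_sub_eq (Z : Submodule ℝ E) {z₀ : E} (hz₀ : z₀ ∈ Z)
    (hne : z₀ ≠ 0) {s : ℝ} (hs : 0 ≤ s) : ∃ z ∈ Z, ‖z‖ = s ∧ ‖z₀ - z‖ = |‖z₀‖ - s| := by
  have hpos : 0 < ‖z₀‖ := norm_pos_iff.2 hne
  refine ⟨(s / ‖z₀‖) • z₀, Z.smul_mem _ hz₀, ?_, ?_⟩
  · rw [norm_smul_of_nonneg (by positivity), div_mul_cancel₀ _ hpos.ne']
  · have hsub : z₀ - (s / ‖z₀‖) • z₀ = (1 - s / ‖z₀‖) • z₀ := by module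
    rw [hsub, norm_smul, Real.norm_eq_abs, ← abs_of_pos hpos, ← abs_mul, abs_of_pos hpos]
    congr 1
    field_simp

lemma norm_le_norm_apply_of_one_le_minMod {T : E →L[ℝ] F} (hT : 1 ≤ minMod T) (x : E) :
    ‖x‖ ≤ ‖T x‖ := by
  rcases eq_or_ne x 0 with rfl | hx
  · simp
  have h := hT.trans (csInf_le ⟨0, by rintro _ ⟨_, -, rfl⟩; exact norm_nonneg _⟩
    ⟨NormedSpace.normalize x, NormedSpace.norm_normalize_eq_one_iff.2 hx, rfl⟩)
  rwa [NormedSpace.normalize, map_smul, norm_smul, norm_inv, norm_norm, inv_mul_eq_div,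
    one_le_div (norm_pos_iff.2 hx)] at h

namespace WeaklyNull

lemma map {w : ℕ → E} (hw : WeaklyNull w) (T : E →L[ℝ] F) : WeaklyNull fun n => T (w n) :=
  fun f => hw (f.comp T)

-- Uniform boundedness, applied to the images of `w n` in the bidual.
lemma exists_norm_le {w : ℕ → E} (hw : WeaklyNull w) : ∃ C, ∀ n, ‖w n‖ ≤ C := by
  obtain ⟨C, hC⟩ := banach_steinhaus (g := fun n => NormedSpace.inclusionInDoubleDual ℝ E (w n))
    fun f => by
      obtain ⟨c, hc⟩ := (hw f).norm.bddAbove_range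
      exact ⟨c, fun n => hc ⟨n, rfl⟩⟩
  exact ⟨C, fun n => (NormedSpace.inclusionInDoubleDualLi ℝ (E := E)).norm_map (w n) ▸ hC n⟩

lemma tendsto_zero [FiniteDimensional ℝ E] {w : ℕ → E} (hw : WeaklyNull w) :
    Tendsto w atTop (𝓝 0) := by
  let e := (Module.finBasis ℝ E).equivFunL
  have he : Tendsto (fun n => e (w n)) atTop (𝓝 0) :=
    tendsto_pi_nhds.2 fun i => by
      exact hw ((ContinuousLinearMap.proj (R := ℝ) (φ := fun _ => ℝ) i).comp (e : E →L[ℝ] _))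
  simpa [Function.comp_def] using (e.symm.continuous.tendsto 0).comp he

-- `Z` need not be closed; the quotient by its closure is a finite-dimensional normed space
-- whose norm is the distance to `Z`.
lemma eventually_exists_mem_norm_sub_lt {w : ℕ → E} (hw : WeaklyNull w) (Z : Submodule ℝ E)
    [FiniteDimensional ℝ (E ⧸ Z)] {ε : ℝ} (hε : 0 < ε) :
    ∀ᶠ n in atTop, ∃ z ∈ Z, ‖w n - z‖ < ε := by
  set K := Z.topologicalClosure
  have : IsClosed (K : Set E) := Z.isClosed_topologicalClosure
  have : FiniteDimensional ℝ (E ⧸ K) :=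
    Module.Finite.of_surjective _ (Submodule.factor_surjective Z.le_topologicalClosure)
  have hq := (hw.map K.mkQL).tendsto_zero.norm.eventually (gt_mem_nhds (by simpa using hε))
  filter_upwards [hq] with n hn
  have hdist : Metric.infDist (w n) Z < ε := by
    rw [← Metric.infDist_closure, ← Submodule.topologicalClosure_coe]
    exact (QuotientAddGroup.norm_mk (S := K.toAddSubgroup) (w n)).symm.trans_lt hn
  obtain ⟨z, hz, hwz⟩ := (Metric.infDist_lt_iff ⟨0, Z.zero_mem⟩).1 hdist
  exact ⟨z, hz, by rwa [← dist_eq_norm]⟩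

lemma exists_mem_norm_le_lt_norm_add {w : ℕ → E} (hw : WeaklyNull w) {x : E} {c l : ℝ}
    (hl : 0 ≤ l) (h : ∀ δ > 0, ∃ᶠ n in atTop, c < ‖x + w n‖ ∧ ‖w n‖ < l + δ)
    (Z : Submodule ℝ E) [FiniteDimensional ℝ (E ⧸ Z)] :
    ∀ δ > 0, ∃ z ∈ Z, ‖z‖ ≤ l ∧ c < ‖x + z‖ + δ := by
  intro δ hδ
  obtain ⟨n, ⟨hcn, hln⟩, z₀, hz₀, hwz₀⟩ := ((h (δ / 3) (by positivity)).and_eventually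
    (hw.eventually_exists_mem_norm_sub_lt Z (by positivity : 0 < δ / 3))).exists
  have hz₀l : ‖z₀‖ < l + 2 * (δ / 3) := by linarith [norm_le_norm_add_norm_sub (w n) z₀]
  obtain ⟨z, hz, hzl, hz₀z⟩ : ∃ z ∈ Z, ‖z‖ ≤ l ∧ ‖z₀ - z‖ < 2 * (δ / 3) := by
    by_cases hz₀l' : ‖z₀‖ ≤ l
    · exact ⟨z₀, hz₀, hz₀l', by simpa using hδ⟩
    obtain ⟨z, hz, hzl, hd⟩ := Z.exists_mem_norm_eq_norm_sub_eq hz₀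
      (norm_pos_iff.1 (hl.trans_lt (not_le.1 hz₀l'))) hl
    exact ⟨z, hz, hzl.le, by rw [hd, abs_of_nonneg (by linarith)]; linarith⟩
  refine ⟨z, hz, hzl, hcn.trans_le ?_⟩
  calc ‖x + w n‖ ≤ ‖x + z‖ + ‖w n - z₀‖ + ‖z₀ - z‖ := by
        have : x + w n = (x + z) + (w n - z₀) + (z₀ - z) := by abel
        rw [this]
        exact norm_add₃_le
    _ ≤ ‖x + z‖ + δ := by linarith

lemma exists_mem_le_norm_norm_add_lt {u : ℕ → E} (hu : WeaklyNull u) {y : E} {c l : ℝ}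
    (h : ∀ δ > 0, ∃ᶠ n in atTop, l - δ < ‖u n‖ ∧ ‖y + u n‖ < c + δ)
    (Z : Submodule ℝ E) [FiniteDimensional ℝ (E ⧸ Z)] :
    ∀ δ > 0, ∃ z ∈ Z, l ≤ ‖z‖ ∧ ‖y + z‖ < c + δ := by
  intro δ hδ
  -- for `l > 0`, taking `ε ≤ l / 2` keeps the approximating vector away from `0`
  obtain ⟨ε, hε, hεδ, hεl⟩ : ∃ ε > 0, ε ≤ δ / 4 ∧ (0 < l → 2 * ε ≤ l) := by
    rcases le_or_gt l 0 with hl | hl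
    · exact ⟨δ / 4, by positivity, le_rfl, fun h => absurd h (not_lt.2 hl)⟩
    · exact ⟨min (δ / 4) (l / 2), by positivity, min_le_left _ _,
        fun _ => by linarith [min_le_right (δ / 4) (l / 2)]⟩
  obtain ⟨n, ⟨hln, hcn⟩, z₀, hz₀, huz₀⟩ :=
    ((h ε hε).and_eventually (hu.eventually_exists_mem_norm_sub_lt Z hε)).exists
  have hz₀l : l - 2 * ε < ‖z₀‖ := by linarith [norm_le_norm_add_norm_sub' (u n) z₀]
  obtain ⟨z, hz, hzl, hz₀z⟩ : ∃ z ∈ Z, l ≤ ‖z‖ ∧ ‖z₀ - z‖ < 2 * ε := by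
    by_cases hz₀l' : l ≤ ‖z₀‖
    · exact ⟨z₀, hz₀, hz₀l', by simpa using hε⟩
    have hl : 0 < l := (norm_nonneg z₀).trans_lt (not_le.1 hz₀l')
    obtain ⟨z, hz, hzl, hd⟩ := Z.exists_mem_norm_eq_norm_sub_eq hz₀
      (norm_pos_iff.1 (by linarith [hεl hl])) hl.le
    exact ⟨z, hz, hzl.ge, by rw [hd, abs_of_nonpos (by linarith)]; linarith⟩
  refine ⟨z, hz, hzl, lt_of_le_of_lt ?_ (by linarith : ‖y + u n‖ + 3 * ε < c + δ)⟩
  calc ‖y + z‖ ≤ ‖y + u n‖ + ‖z₀ - u n‖ + ‖z - z₀‖ := by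
        have : y + z = (y + u n) + (z₀ - u n) + (z - z₀) := by abel
        rw [this]
        exact norm_add₃_le
    _ ≤ ‖y + u n‖ + 3 * ε := by rw [norm_sub_rev z₀, norm_sub_rev z]; linarith

end WeaklyNull

lemma le_one_add_asympUnifSmoothnessModulus {u : E} (hu : ‖u‖ = 1) {t c : ℝ} (ht : 0 ≤ t)
    (h : ∀ Z : Submodule ℝ E, FiniteDimensional ℝ (E ⧸ Z) →
      ∀ δ > 0, ∃ z ∈ Z, ‖z‖ ≤ t ∧ c < ‖u + z‖ + δ) :
    c ≤ 1 + asympUnifSmoothnessModulus E t := by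
  have hle : ∀ u' : E, ‖u'‖ = 1 → ∀ Z : Submodule ℝ E,
      ∀ r ∈ {r : ℝ | ∃ z ∈ Z, ‖z‖ ≤ t ∧ r = ‖u' + z‖ - 1}, r ≤ t := by
    rintro u' hu' Z _ ⟨z, -, hz, rfl⟩
    linarith [norm_add_le u' z]
  have hmem : ∀ u' : E, ‖u'‖ = 1 → ∀ Z : Submodule ℝ E,
      (0 : ℝ) ∈ {r : ℝ | ∃ z ∈ Z, ‖z‖ ≤ t ∧ r = ‖u' + z‖ - 1} :=
    fun u' hu' Z => ⟨0, Z.zero_mem, by simpa using ht, by simp [hu']⟩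
  rw [← sub_le_iff_le_add', asympUnifSmoothnessModulus]
  refine le_csSup_of_le ⟨t, ?_⟩ ⟨u, hu, rfl⟩ (le_csInf ⟨_, ⊤, inferInstance, rfl⟩ ?_)
  · rintro _ ⟨u', hu', rfl⟩
    refine csInf_le_of_le ⟨0, ?_⟩ ⟨⊤, inferInstance, rfl⟩
      (csSup_le ⟨0, hmem u' hu' ⊤⟩ (hle u' hu' ⊤))
    rintro _ ⟨Z, -, rfl⟩
    exact le_csSup ⟨t, hle u' hu' Z⟩ (hmem u' hu' Z)
  · rintro _ ⟨Z, hZ, rfl⟩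
    refine le_of_forall_pos_lt_add fun δ hδ => ?_
    obtain ⟨z, hz, hzt, hcz⟩ := h Z hZ δ hδ
    rw [← sub_lt_iff_lt_add]
    exact lt_csSup_of_lt ⟨t, hle u hu Z⟩ ⟨z, hz, hzt, rfl⟩ (by linarith)

lemma one_add_asympUnifConvexityModulus_le {v : E} (hv : ‖v‖ = 1) {t c : ℝ}
    (h : ∀ Z : Submodule ℝ E, FiniteDimensional ℝ (E ⧸ Z) →
      ∀ δ > 0, ∃ z ∈ Z, t ≤ ‖z‖ ∧ ‖v + z‖ < c + δ) :
    1 + asympUnifConvexityModulus E t ≤ c := by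
  have hge : ∀ (v' : E) (Z : Submodule ℝ E),
      ∀ r ∈ {r : ℝ | ∃ z ∈ Z, t ≤ ‖z‖ ∧ r = ‖v' + z‖ - 1}, -1 ≤ r := by
    rintro v' Z _ ⟨z, -, -, rfl⟩
    linarith [norm_nonneg (v' + z)]
  rw [← le_sub_iff_add_le', asympUnifConvexityModulus]
  refine csInf_le_of_le ⟨-1, ?_⟩ ⟨v, hv, rfl⟩ (csSup_le ⟨_, ⊤, inferInstance, rfl⟩ ?_)
  · rintro _ ⟨v', -, rfl⟩
    by_cases hG : BddAbove {s : ℝ | ∃ Z : Submodule ℝ E, FiniteDimensional ℝ (E ⧸ Z) ∧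
        s = sInf {r : ℝ | ∃ z ∈ Z, t ≤ ‖z‖ ∧ r = ‖v' + z‖ - 1}}
    · exact le_csSup_of_le hG ⟨⊤, inferInstance, rfl⟩ (Real.le_sInf (hge v' ⊤) (by norm_num))
    · rw [Real.sSup_of_not_bddAbove hG]
      norm_num
  · rintro _ ⟨Z, hZ, rfl⟩
    refine le_of_forall_pos_lt_add fun δ hδ => ?_
    obtain ⟨z, hz, htz, hvz⟩ := h Z hZ δ hδ
    exact csInf_lt_of_lt ⟨-1, hge v Z⟩ ⟨z, hz, htz, rfl⟩ (by linarith)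

lemma le_mul_one_add_asympUnifSmoothnessModulus {x : E} {c l R : ℝ} (hR : 0 < R)
    (hx : ‖x‖ ≤ R) (hl : 0 ≤ l)
    (h : ∀ Z : Submodule ℝ E, FiniteDimensional ℝ (E ⧸ Z) →
      ∀ δ > 0, ∃ z ∈ Z, ‖z‖ ≤ l ∧ c < ‖x + z‖ + δ) :
    c ≤ R * (1 + asympUnifSmoothnessModulus E (l / R)) := by
  rcases subsingleton_or_nontrivial E with hE | hE
  · have hc : c ≤ 0 := le_of_forall_pos_lt_add fun δ hδ => by
      obtain ⟨z, -, -, hz⟩ := h ⊤ inferInstance δ hδ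
      simpa [Subsingleton.elim (x + z) 0] using hz
    have : asympUnifSmoothnessModulus E (l / R) = 0 := by
      simp [asympUnifSmoothnessModulus, Subsingleton.elim _ (0 : E)]
    rw [this]
    linarith
  obtain ⟨u, hu, hxu⟩ := exists_norm_eq_one_norm_smul_eq x
  rw [← div_le_iff₀' hR]
  refine le_one_add_asympUnifSmoothnessModulus hu (by positivity) fun Z hZ δ hδ => ?_
  obtain ⟨z, hz, hzl, hcz⟩ := h Z hZ (R * δ) (by positivity)
  have hzR : ‖R⁻¹ • z‖ ≤ l / R := by
    rw [norm_smul, norm_inv, Real.norm_of_nonneg hR.le, inv_mul_eq_div]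
    gcongr
  -- `x / R` lies on the segment between `-u` and `u`
  have hmax : ‖x + z‖ ≤ R * max ‖u + R⁻¹ • z‖ ‖u - R⁻¹ • z‖ := by
    calc ‖x + z‖ = R * ‖(‖x‖ / R) • u + R⁻¹ • z‖ := by
          rw [← norm_smul_of_nonneg hR.le, smul_add, smul_smul, smul_smul,
            mul_div_cancel₀ _ hR.ne', mul_inv_cancel₀ hR.ne', one_smul, hxu]
      _ ≤ R * max ‖u + R⁻¹ • z‖ ‖u - R⁻¹ • z‖ := by
          gcongr
          refine norm_smul_add_le_max ?_ _ _
          rw [abs_div, abs_norm, abs_of_pos hR]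
          exact (div_le_one hR).2 hx
  have hc : c / R < max ‖u + R⁻¹ • z‖ ‖u - R⁻¹ • z‖ + δ := by
    rw [div_lt_iff₀ hR]
    linarith
  rcases max_choice ‖u + R⁻¹ • z‖ ‖u - R⁻¹ • z‖ with hm | hm <;> rw [hm] at hc
  · exact ⟨R⁻¹ • z, Z.smul_mem _ hz, hzR, hc⟩
  · exact ⟨-(R⁻¹ • z), Z.neg_mem (Z.smul_mem _ hz), by rwa [norm_neg], by rwa [← sub_eq_add_neg]⟩

lemma mul_one_add_asympUnifConvexityModulus_le {y : E} (hy : y ≠ 0) {c l : ℝ}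
    (h : ∀ Z : Submodule ℝ E, FiniteDimensional ℝ (E ⧸ Z) →
      ∀ δ > 0, ∃ z ∈ Z, l ≤ ‖z‖ ∧ ‖y + z‖ < c + δ) :
    ‖y‖ * (1 + asympUnifConvexityModulus E (l / ‖y‖)) ≤ c := by
  have hR : 0 < ‖y‖ := norm_pos_iff.2 hy
  rw [← le_div_iff₀' hR]
  refine one_add_asympUnifConvexityModulus_le (NormedSpace.norm_normalize_eq_one_iff.2 hy)
    fun Z hZ δ hδ => ?_
  obtain ⟨z, hz, hlz, hyz⟩ := h Z hZ (‖y‖ * δ) (by positivity)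
  refine ⟨‖y‖⁻¹ • z, Z.smul_mem _ hz, ?_, ?_⟩
  · rw [norm_smul, norm_inv, norm_norm, inv_mul_eq_div]
    gcongr
  · rw [NormedSpace.normalize, ← smul_add, norm_smul, norm_inv, norm_norm, inv_mul_eq_div,
      div_lt_iff₀ hR, add_mul, div_mul_cancel₀ _ hR.ne']
    linarith

end NormedSpace

theorem stmt10_general {X Y : Type*} [NormedAddCommGroup X] [NormedSpace ℝ X]
    [NormedAddCommGroup Y] [NormedSpace ℝ Y]
    (h : ∀ t : ℝ, 0 ≤ t → asympUnifSmoothnessModulus X t ≤ asympUnifConvexityModulus Y t) :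
    PairPropM X Y := by
  intro T hT x y hxy xs hxs
  have hTx := norm_le_norm_apply_of_one_le_minMod hT
  obtain ⟨C, hC⟩ := hxs.exists_norm_le
  have hbdd : IsBoundedUnder (· ≤ ·) atTop fun n => ‖y + T (xs n)‖ :=
    isBoundedUnder_of ⟨‖y‖ + ‖T‖ * C, fun n => (norm_add_le _ _).trans
      (add_le_add_right ((T.le_opNorm _).trans
        (mul_le_mul_of_nonneg_left (hC n) (norm_nonneg T))) _)⟩
  rcases eq_or_ne y 0 with rfl | hy
  · obtain rfl : x = 0 := norm_le_zero_iff.1 (by simpa using hxy)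
    simp only [zero_add] at hbdd ⊢
    exact limsup_le_limsup (.of_forall fun n => hTx _)
      (isCoboundedUnder_le_of_le _ fun n => norm_nonneg _) hbdd
  refine le_of_forall_lt_imp_le_of_dense fun c hc => ?_
  obtain ⟨l, hl, hcl⟩ := isCompact_Icc.exists_forall_mem_nhds_frequently_and_mem
    (frequently_lt_of_lt_limsup (isCoboundedUnder_le_of_le _ fun n => norm_nonneg _) hc)
    fun n => (⟨norm_nonneg _, hC n⟩ : ‖xs n‖ ∈ Icc 0 C)
  have hnear : ∀ δ > 0, ∃ᶠ n in atTop, c < ‖x + xs n‖ ∧ ‖xs n‖ ∈ Ioo (l - δ) (l + δ) :=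
    fun δ hδ => hcl _ (Ioo_mem_nhds (by linarith) (by linarith))
  have hupper : c ≤ ‖y‖ * (1 + asympUnifSmoothnessModulus X (l / ‖y‖)) :=
    le_mul_one_add_asympUnifSmoothnessModulus (norm_pos_iff.2 hy) hxy hl.1 fun Z _ =>
      hxs.exists_mem_norm_le_lt_norm_add hl.1
        (fun δ hδ => (hnear δ hδ).mono fun n hn => ⟨hn.1, hn.2.2⟩) Z
  have hlower : ‖y‖ * (1 + asympUnifConvexityModulus Y (l / ‖y‖)) ≤
      limsup (fun n => ‖y + T (xs n)‖) atTop :=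
    mul_one_add_asympUnifConvexityModulus_le hy fun Z _ =>
      (hxs.map T).exists_mem_le_norm_norm_add_lt (fun δ hδ =>
        ((hnear δ hδ).and_eventually
          (eventually_lt_of_limsup_lt (lt_add_of_pos_right _ hδ) hbdd)).mono
            fun n hn => ⟨hn.1.2.1.trans_le (hTx _), hn.2⟩) Z
  calc c ≤ ‖y‖ * (1 + asympUnifSmoothnessModulus X (l / ‖y‖)) := hupper
    _ ≤ ‖y‖ * (1 + asympUnifConvexityModulus Y (l / ‖y‖)) := by
        gcongr
        exact h _ (div_nonneg hl.1 (norm_nonneg y))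
    _ ≤ _ := hlower

theorem stmt10 {X Y : Type*} [NormedAddCommGroup X] [NormedSpace ℝ X] [CompleteSpace X]
    [NormedAddCommGroup Y] [NormedSpace ℝ Y] [CompleteSpace Y]
    (h : ∀ t : ℝ, 0 ≤ t → asympUnifSmoothnessModulus X t ≤ asympUnifConvexityModulus Y t) :
    PairPropM X Y :=
  stmt10_general h
end

section
/- For every 1 ≤ p < ∞, the pair (ℓ_1, ℓ_p) fails the weak minimizing property: the diagonal operator T : ℓ_1 → ℓ_p defined by T e*_n = 2^{-n} f_n (where (e*_n) and (f_n) are the canonical bases) does not attain its minimum modulus m(T) = 0, yet the sequence (e*_n) of unit vectors is a minimizing sequence for T that is not weakly null. -/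
/-
The operator is the composite of the norm-one inclusion `ℓ¹ ⊆ ℓ^∞` with pointwise multiplication
by `w = (2^{-(n+1)})_n ∈ ℓ^p`, which is bounded `ℓ^∞ → ℓ^p` by Hölder. It sends the unit vector
`e_n` to a vector of norm `2^{-(n+1)} → 0`, so `m(T) = 0`; yet `T` is injective because `w` has
no zero entry, so no unit vector realises the infimum. Finally `(e_n)` is not weakly null in `ℓ¹`,
since the summation functional is `1` on every `e_n`.
-/

open Filter Topology

open scoped ENNReal

noncomputable def stdBasis (p : ℝ≥0∞) (n : ℕ) : lp (fun _ : ℕ => ℝ) p := lp.single p n 1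

section MinimumModulus

variable {X Y : Type*} [NormedAddCommGroup X] [NormedSpace ℝ X]
  [NormedAddCommGroup Y] [NormedSpace ℝ Y]

lemma minMod_nonneg (T : X →L[ℝ] Y) : 0 ≤ minMod T :=
  Real.sInf_nonneg <| by rintro _ ⟨x, -, rfl⟩; exact norm_nonneg _

lemma minMod_le {T : X →L[ℝ] Y} {x : X} (hx : ‖x‖ = 1) : minMod T ≤ ‖T x‖ :=
  csInf_le ⟨0, by rintro _ ⟨y, -, rfl⟩; exact norm_nonneg _⟩ ⟨x, hx, rfl⟩

lemma minMod_eq_zero_of_tendsto {T : X →L[ℝ] Y} {xs : ℕ → X} (hxs : ∀ n, ‖xs n‖ = 1)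
    (h : Tendsto (fun n => ‖T (xs n)‖) atTop (𝓝 0)) : minMod T = 0 :=
  le_antisymm (ge_of_tendsto' h fun n => minMod_le (hxs n)) (minMod_nonneg T)

lemma not_attainsMinMod_of_injective {T : X →L[ℝ] Y} (hT : Function.Injective T)
    (h : minMod T = 0) : ¬ AttainsMinMod T := by
  rintro ⟨x, hx, hTx⟩
  rw [h, norm_eq_zero, ← map_zero T] at hTx
  simp [hT hTx] at hx

lemma not_weaklyNull_of_apply_eq_one {xs : ℕ → X} (f : X →L[ℝ] ℝ) (hf : ∀ n, f (xs n) = 1) :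
    ¬ WeaklyNull xs := fun h =>
  one_ne_zero <| tendsto_nhds_unique tendsto_const_nhds (by simpa only [hf] using h f)

end MinimumModulus

namespace lp

variable {α : Type*} {E : α → Type*} [∀ i, NormedAddCommGroup (E i)] [∀ i, NormedSpace ℝ (E i)]

noncomputable def inclusionTopCLM (p : ℝ≥0∞) [Fact (1 ≤ p)] : lp E p →L[ℝ] lp E ∞ :=
  (linearMapOfLE ℝ E le_top).mkContinuous 1 fun x =>
    norm_le_of_forall_le (by positivity) fun i => by
      simpa using norm_apply_le_norm (zero_lt_one.trans_le Fact.out).ne' x i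

end lp

section Diagonal

variable {α : Type*} {p : ℝ≥0∞} [Fact (1 ≤ p)]

noncomputable def diagonalCLM (w : lp (fun _ : α => ℝ) p) :
    lp (fun _ : α => ℝ) 1 →L[ℝ] lp (fun _ : α => ℝ) p :=
  (lp.holderL (p := ∞) p (fun _ => ContinuousLinearMap.mul ℝ ℝ) (K := 1)
    fun _ => ContinuousLinearMap.opNorm_mul_le ℝ ℝ).flip w ∘L lp.inclusionTopCLM 1

@[simp]
lemma diagonalCLM_apply (w : lp (fun _ : α => ℝ) p) (x : lp (fun _ : α => ℝ) 1) (i : α) :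
    diagonalCLM w x i = x i * w i := rfl

lemma diagonalCLM_injective {w : lp (fun _ : α => ℝ) p} (hw : ∀ i, w i ≠ 0) :
    Function.Injective (diagonalCLM w) := by
  refine (injective_iff_map_eq_zero _).2 fun x hx => lp.ext <| funext fun i => ?_
  have := congrArg (fun y : lp (fun _ : α => ℝ) p => y i) hx
  simpa [hw i] using this

lemma diagonalCLM_single [DecidableEq α] (w : lp (fun _ : α => ℝ) p) (i : α) (c : ℝ) :
    diagonalCLM w (lp.single 1 i c) = lp.single p i (c * w i) := by
  ext j
  rcases eq_or_ne j i with rfl | hj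
  · simp
  · simp [hj]

end Diagonal

lemma norm_stdBasis (p : ℝ≥0∞) [Fact (1 ≤ p)] (n : ℕ) : ‖stdBasis p n‖ = 1 := by
  simp [stdBasis, lp.norm_single (zero_lt_one.trans_le Fact.out)]

lemma tsumCLM_stdBasis (n : ℕ) : lp.tsumCLM ℝ ℕ ℝ (stdBasis 1 n) = 1 := by
  simp [stdBasis]

lemma memℓp_one_half_pow (p : ℝ≥0∞) [Fact (1 ≤ p)] :
    Memℓp (fun n : ℕ => (1 / 2 : ℝ) ^ (n + 1)) p := by
  refine Memℓp.of_exponent_ge (memℓp_gen (p := 1) ?_) Fact.out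
  simp only [ENNReal.toReal_one, Real.rpow_one, norm_pow, norm_div, norm_one, Real.norm_ofNat]
  exact summable_geometric_two.comp_injective (add_left_injective 1)

theorem stmt12_general (p : ℝ≥0∞) [Fact (1 ≤ p)] :
    ∃ T : lp (fun _ : ℕ => ℝ) 1 →L[ℝ] lp (fun _ : ℕ => ℝ) p,
      (∀ n : ℕ, T (stdBasis 1 n) = ((1/2 : ℝ) ^ (n + 1)) • stdBasis p n) ∧
      minMod T = 0 ∧
      ¬ AttainsMinMod T ∧
      (∀ n : ℕ, ‖stdBasis 1 n‖ = 1) ∧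
      Tendsto (fun n => ‖T (stdBasis 1 n)‖) atTop (𝓝 (minMod T)) ∧
      ¬ WeaklyNull (stdBasis 1) := by
  let T := diagonalCLM (⟨_, memℓp_one_half_pow p⟩ : lp (fun _ : ℕ => ℝ) p)
  have hT : ∀ n, T (stdBasis 1 n) = ((1/2 : ℝ) ^ (n + 1)) • stdBasis p n := fun n => by
    simp [T, stdBasis, diagonalCLM_single, ← lp.single_smul]
  have hTnorm : ∀ n, ‖T (stdBasis 1 n)‖ = (1/2 : ℝ) ^ (n + 1) := fun n => by
    simp [hT, norm_smul, norm_stdBasis]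
  have hlim : Tendsto (fun n => ‖T (stdBasis 1 n)‖) atTop (𝓝 0) := by
    simp only [hTnorm]
    exact (tendsto_pow_atTop_nhds_zero_of_lt_one (by norm_num) (by norm_num)).comp
      (tendsto_add_atTop_nat 1)
  have hmin : minMod T = 0 := minMod_eq_zero_of_tendsto (norm_stdBasis 1) hlim
  have hinj : Function.Injective T := diagonalCLM_injective fun n => by positivity
  exact ⟨T, hT, hmin, not_attainsMinMod_of_injective hinj hmin, norm_stdBasis 1, hmin ▸ hlim,
    not_weaklyNull_of_apply_eq_one _ tsumCLM_stdBasis⟩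

theorem stmt12 (p : ℝ≥0∞) [Fact (1 ≤ p)] (hp : p ≠ ⊤) :
    ∃ T : lp (fun _ : ℕ => ℝ) 1 →L[ℝ] lp (fun _ : ℕ => ℝ) p,
      (∀ n : ℕ, T (stdBasis 1 n) = ((1/2 : ℝ) ^ (n + 1)) • stdBasis p n) ∧
      minMod T = 0 ∧
      ¬ AttainsMinMod T ∧
      (∀ n : ℕ, ‖stdBasis 1 n‖ = 1) ∧
      Tendsto (fun n => ‖T (stdBasis 1 n)‖) atTop (𝓝 (minMod T)) ∧
      ¬ WeaklyNull (stdBasis 1) :=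
  stmt12_general p
end

section
/- The pair (c_0, c_0) fails the weak minimizing property: the operator T ∈ L(c_0) defined by T = 2 e*_1 ⊗ e_1 + Σ_{i≥2} (1 + 1/i) e*_i ⊗ e_i satisfies m(T) = 1 and does not attain its minimum modulus, while the sequence ((1/2)e_1 + e_n)_n is a non-weakly null minimizing sequence for T. -/
/-
Write `T = 1 + M_v` with `v i = 1 / (i + 1)`, a strictly positive element of `c₀`. Every nonzero
`x ∈ c₀` attains its norm at some coordinate `i`, where `T` multiplies by `1 + v i > 1`; hence
`‖T x‖ > 1` for every unit vector `x`, so `m(T) ≥ 1` and the bound is never attained. The unit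
vectors `½ e₀ + e_{n+1}` are mapped to `e₀ + (1 + v (n+1)) e_{n+1}`, of norm `1 + v (n+1) → 1`,
so `m(T) = 1`, while the `0`-th coordinate functional is constantly `½` on them.
-/

open Filter Topology

open scoped ZeroAtInfty

namespace ZeroAtInftyContinuousMap

section Norm

variable {α β : Type*} [TopologicalSpace α] [NormedAddCommGroup β]

theorem norm_apply_le (f : C₀(α, β)) (a : α) : ‖f a‖ ≤ ‖f‖ :=
  f.toBCF.norm_coe_le_norm a

theorem norm_le (f : C₀(α, β)) {C : ℝ} (hC : 0 ≤ C) : ‖f‖ ≤ C ↔ ∀ a, ‖f a‖ ≤ C :=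
  BoundedContinuousFunction.norm_le (f := f.toBCF) hC

theorem exists_norm_apply_eq_norm {f : C₀(α, β)} (hf : f ≠ 0) : ∃ a, ‖f a‖ = ‖f‖ := by
  obtain ⟨a₀, ha₀⟩ : ∃ a₀, f a₀ ≠ 0 := by
    by_contra! h
    exact hf (ext h)
  have hsmall : ∀ᶠ a in cocompact α, ‖f a‖ ≤ ‖f a₀‖ :=
    (zero_at_infty f).norm.eventually (ge_mem_nhds (by rwa [norm_zero, norm_pos_iff]))
  obtain ⟨a, ha⟩ := f.continuous.norm.exists_forall_ge' a₀ hsmall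
  exact ⟨a, le_antisymm (f.norm_apply_le a) ((f.norm_le (norm_nonneg _)).2 ha)⟩

variable (𝕜 : Type*) [NormedField 𝕜] [NormedSpace 𝕜 β]

noncomputable def evalCLM (a : α) : C₀(α, β) →L[𝕜] β :=
  LinearMap.mkContinuous
    { toFun := fun f => f a
      map_add' := fun _ _ => rfl
      map_smul' := fun _ _ => rfl }
    1 fun f => by simpa using f.norm_apply_le a

@[simp]
theorem evalCLM_apply (a : α) (f : C₀(α, β)) : evalCLM 𝕜 a f = f a := rfl

end Norm

section Single

variable {α β : Type*} [TopologicalSpace α] [DiscreteTopology α] [DecidableEq α]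
  [NormedAddCommGroup β]

def single (a : α) (b : β) : C₀(α, β) where
  toFun := Pi.single (M := fun _ => β) a b
  continuous_toFun := continuous_of_discreteTopology
  zero_at_infty' := by
    rw [cocompact_eq_cofinite]
    refine tendsto_nhds_of_eventually_eq ?_
    filter_upwards [eventually_cofinite_ne a] with c hc
    exact Pi.single_eq_of_ne (M := fun _ => β) hc b

theorem single_apply (a : α) (b : β) (c : α) : single a b c = if c = a then b else 0 :=
  Pi.single_apply a b c

theorem smul_single {𝕜 : Type*} [NormedField 𝕜] [NormedSpace 𝕜 β] (k : 𝕜) (a : α) (b : β) :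
    k • single a b = single a (k • b) := by
  ext c
  simp only [smul_apply, single_apply, smul_ite, smul_zero]

theorem norm_single_add_single {a a' : α} (h : a ≠ a') (b b' : β) :
    ‖single a b + single a' b'‖ = max ‖b‖ ‖b'‖ := by
  apply le_antisymm
  · refine (norm_le _ (by positivity)).2 fun c => ?_
    by_cases hc : c = a
    · subst hc; simp [single_apply, h]
    · by_cases hc' : c = a'
      · subst hc'; simp [single_apply, hc]
      · simp [single_apply, hc, hc']
  · refine max_le ?_ ?_
    · simpa [single_apply, h] using norm_apply_le (single a b + single a' b') a
    · simpa [single_apply, h.symm] using norm_apply_le (single a b + single a' b') a'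

end Single

section OneAddMul

variable {α : Type*} [TopologicalSpace α] (v : C₀(α, ℝ))

theorem one_add_mul_apply (x : C₀(α, ℝ)) (a : α) :
    (1 + ContinuousLinearMap.mul ℝ C₀(α, ℝ) v) x a = (1 + v a) * x a :=
  (one_add_mul (v a) (x a)).symm

theorem one_lt_norm_one_add_mul_apply (hv : ∀ a, 0 < v a) {x : C₀(α, ℝ)} (hx : ‖x‖ = 1) :
    1 < ‖(1 + ContinuousLinearMap.mul ℝ C₀(α, ℝ) v) x‖ := by
  obtain ⟨a, ha⟩ := exists_norm_apply_eq_norm (norm_ne_zero_iff.1 (hx ▸ one_ne_zero))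
  have hxa : |x a| = 1 := by rw [← Real.norm_eq_abs, ha, hx]
  calc 1 < (1 + v a) * |x a| := by rw [hxa, mul_one]; linarith [hv a]
    _ = ‖(1 + ContinuousLinearMap.mul ℝ C₀(α, ℝ) v) x a‖ := by
        rw [one_add_mul_apply, Real.norm_eq_abs, abs_mul,
          abs_of_pos (show 0 < 1 + v a by linarith [hv a])]
    _ ≤ ‖(1 + ContinuousLinearMap.mul ℝ C₀(α, ℝ) v) x‖ := norm_apply_le _ a

theorem one_add_mul_single [DiscreteTopology α] [DecidableEq α] (a : α) (b : ℝ) :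
    (1 + ContinuousLinearMap.mul ℝ C₀(α, ℝ) v) (single a b) = single a ((1 + v a) * b) := by
  ext c
  rw [one_add_mul_apply, single_apply, single_apply]
  split_ifs with h
  · rw [h]
  · rw [mul_zero]

end OneAddMul

end ZeroAtInftyContinuousMap

section MinimumModulus

variable {X Y : Type*} [NormedAddCommGroup X] [NormedSpace ℝ X] [NormedAddCommGroup Y]
  [NormedSpace ℝ Y]

theorem minMod_eq_of_tendsto {T : X →L[ℝ] Y} {c : ℝ} (hc : ∀ x, ‖x‖ = 1 → c ≤ ‖T x‖)
    {xs : ℕ → X} (hxs : ∀ n, ‖xs n‖ = 1) (hT : Tendsto (fun n => ‖T (xs n)‖) atTop (𝓝 c)) :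
    minMod T = c := by
  have hbdd : BddBelow {r | ∃ x : X, ‖x‖ = 1 ∧ ‖T x‖ = r} :=
    ⟨0, by rintro _ ⟨x, -, rfl⟩; exact norm_nonneg _⟩
  apply le_antisymm
  · exact ge_of_tendsto hT (Eventually.of_forall fun n => csInf_le hbdd ⟨xs n, hxs n, rfl⟩)
  · exact le_csInf ⟨_, xs 0, hxs 0, rfl⟩ (by rintro _ ⟨x, hx, rfl⟩; exact hc x hx)

theorem not_weaklyNull_of_tendsto {xs : ℕ → X} (f : X →L[ℝ] ℝ) {c : ℝ} (hc : c ≠ 0)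
    (h : Tendsto (fun n => f (xs n)) atTop (𝓝 c)) : ¬ WeaklyNull xs :=
  fun hxs => hc (tendsto_nhds_unique h (hxs f))

end MinimumModulus

open ZeroAtInftyContinuousMap

noncomputable def oneDivSucc : C₀(ℕ, ℝ) where
  toFun i := 1 / ((i : ℝ) + 1)
  continuous_toFun := continuous_of_discreteTopology
  zero_at_infty' := cocompact_eq_atTop (α := ℕ) ▸ tendsto_one_div_add_atTop_nhds_zero_nat

theorem oneDivSucc_apply (i : ℕ) : oneDivSucc i = 1 / ((i : ℝ) + 1) := rfl

theorem oneDivSucc_pos (i : ℕ) : 0 < oneDivSucc i := by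
  rw [oneDivSucc_apply]
  positivity

theorem tendsto_oneDivSucc_succ : Tendsto (fun n => oneDivSucc (n + 1)) atTop (𝓝 0) :=
  (cocompact_eq_atTop (α := ℕ) ▸ zero_at_infty oneDivSucc).comp (tendsto_add_atTop_nat 1)

theorem stmt14 :
    ∃ (T : C₀(ℕ, ℝ) →L[ℝ] C₀(ℕ, ℝ)) (e : ℕ → C₀(ℕ, ℝ)),
      (∀ n i : ℕ, e n i = if i = n then (1 : ℝ) else 0) ∧
      (∀ (x : C₀(ℕ, ℝ)) (i : ℕ),
        T x i = (if i = 0 then (2 : ℝ) else 1 + 1 / ((i : ℝ) + 1)) * x i) ∧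
      minMod T = 1 ∧
      ¬ AttainsMinMod T ∧
      (∀ n : ℕ, ‖(1/2 : ℝ) • e 0 + e (n + 1)‖ = 1) ∧
      Tendsto (fun n => ‖T ((1/2 : ℝ) • e 0 + e (n + 1))‖) atTop (𝓝 (minMod T)) ∧
      ¬ WeaklyNull (fun n => (1/2 : ℝ) • e 0 + e (n + 1)) := by
  set T : C₀(ℕ, ℝ) →L[ℝ] C₀(ℕ, ℝ) := 1 + ContinuousLinearMap.mul ℝ _ oneDivSucc
  have hgt (x : C₀(ℕ, ℝ)) (hx : ‖x‖ = 1) : 1 < ‖T x‖ :=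
    one_lt_norm_one_add_mul_apply _ oneDivSucc_pos hx
  set xs : ℕ → C₀(ℕ, ℝ) := fun n => (1/2 : ℝ) • single 0 1 + single (n + 1) 1
  have hxs (n : ℕ) : xs n = single 0 (1/2 : ℝ) + single (n + 1) 1 := by
    simp only [xs, smul_single, smul_eq_mul, mul_one]
  have hxs_norm (n : ℕ) : ‖xs n‖ = 1 := by
    rw [hxs, norm_single_add_single n.succ_ne_zero.symm]
    norm_num
  have hTxs : Tendsto (fun n => ‖T (xs n)‖) atTop (𝓝 1) := by
    simp only [hxs, map_add, T, one_add_mul_single,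
      norm_single_add_single (Nat.succ_ne_zero _).symm]
    simpa [oneDivSucc_apply, one_add_one_eq_two] using
      (tendsto_const_nhds (x := (1 : ℝ))).max (tendsto_oneDivSucc_succ.const_add 1).norm
  have hmin : minMod T = 1 := minMod_eq_of_tendsto (fun x hx => (hgt x hx).le) hxs_norm hTxs
  refine ⟨T, fun n => single n 1, fun n i => single_apply n 1 i, fun x i => ?_, hmin,
    fun ⟨x, hx, hTx⟩ => (hgt x hx).ne' (hTx.trans hmin), hxs_norm, by rwa [hmin],
    not_weaklyNull_of_tendsto (evalCLM ℝ 0) (c := 1/2) (by norm_num) ?_⟩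
  · rw [one_add_mul_apply, oneDivSucc_apply]
    split_ifs with h
    · norm_num [h]
    · rfl
  · simp [single_apply]
end
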